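/- Define MK_λ(K,K')² := inf over couplings Q ∈ C(K,K') of trace(Q^{1/2} C_λ Q^{1/2}). Then for all density operators R, R' with finite second moments (position and momentum), MK_λ(R^λ, (R')^λ)² = λ · MK_1(R,R')², where R^λ := S_λ R S_λ*. -/

import Mathlib

/-!
With `t = λ^{-1/2}`, conjugation by the unitary dilation on `L²(ℝ^d × ℝ^d)` (`dilate t` on
kernels) maps the couplings of `R, R'` bijectively onto those of `R^λ, (R')^λ`: self-adjointness,
positivity, trace and partial traces survive the change of variables `z ↦ t z`. In the cost of the dilated coupling, `|x - x'|²` picks up the factor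
`t⁻² = λ` and each derivative the factor `t`, so the cost with parameter `λ` is `λ` times the
cost of the original coupling with parameter `λ t² = 1`. Taking infima gives the claim.
-/

open MeasureTheory Complex

noncomputable section

/-- The direction `(e_j, -e_j)` implementing `∂_{x_j} - ∂_{x'_j}` on `ℝ^ι × ℝ^ι`. -/
def vdir {ι : Type*} [Fintype ι] [DecidableEq ι] (j : ι) :
    EuclideanSpace ℝ ι × EuclideanSpace ℝ ι :=
  (EuclideanSpace.single j (1 : ℝ), -EuclideanSpace.single j (1 : ℝ))

/-- `(∂_{x_j} - ∂_{x'_j})` applied in the first variable of a kernel. -/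
def D1 {ι : Type*} [Fintype ι] [DecidableEq ι] (j : ι)
    (q : (EuclideanSpace ℝ ι × EuclideanSpace ℝ ι) →
         (EuclideanSpace ℝ ι × EuclideanSpace ℝ ι) → ℂ) :
    (EuclideanSpace ℝ ι × EuclideanSpace ℝ ι) →
    (EuclideanSpace ℝ ι × EuclideanSpace ℝ ι) → ℂ :=
  fun z w => fderiv ℝ (fun z' => q z' w) z (vdir j)

/-- `(∂_{y_j} - ∂_{y'_j})` applied in the second variable of a kernel. -/
def D2 {ι : Type*} [Fintype ι] [DecidableEq ι] (j : ι)
    (q : (EuclideanSpace ℝ ι × EuclideanSpace ℝ ι) →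
         (EuclideanSpace ℝ ι × EuclideanSpace ℝ ι) → ℂ) :
    (EuclideanSpace ℝ ι × EuclideanSpace ℝ ι) →
    (EuclideanSpace ℝ ι × EuclideanSpace ℝ ι) → ℂ :=
  fun z w => fderiv ℝ (fun w' => q z w') w (vdir j)

/-- Transport cost `trace(Q^{1/2} C_λ Q^{1/2})` of a coupling with kernel `q`, computed
from the kernel: `∫ (|x-x'|² q(z,z) + λ² Σ_j ((∂_{x_j}-∂_{x'_j})⊗(∂_{y_j}-∂_{y'_j}) q)(z,z)) dz`,
where `C_λ = |x-x'|² - λ²|∇_x - ∇_{x'}|²`. -/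
def mkCost {ι : Type*} [Fintype ι] [DecidableEq ι] (lam : ℝ)
    (q : (EuclideanSpace ℝ ι × EuclideanSpace ℝ ι) →
         (EuclideanSpace ℝ ι × EuclideanSpace ℝ ι) → ℂ) : ℝ :=
  ∫ z : EuclideanSpace ℝ ι × EuclideanSpace ℝ ι,
    (((‖z.1 - z.2‖ ^ 2 : ℝ) : ℂ) * q z z
      + ((lam ^ 2 : ℝ) : ℂ) * ∑ j, D1 j (D2 j q) z z).re

/-- A coupling of two density operators with kernels `r, r'`: a density operator on
`L²(ℝ^ι) ⊗ L²(ℝ^ι)` whose marginals (partial traces) are `r` and `r'`. -/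
structure IsCoupling {ι : Type*} [Fintype ι]
    (r r' : EuclideanSpace ℝ ι → EuclideanSpace ℝ ι → ℂ)
    (q : (EuclideanSpace ℝ ι × EuclideanSpace ℝ ι) →
         (EuclideanSpace ℝ ι × EuclideanSpace ℝ ι) → ℂ) : Prop where
  memL2 : MemLp (fun z : (EuclideanSpace ℝ ι × EuclideanSpace ℝ ι) ×
    (EuclideanSpace ℝ ι × EuclideanSpace ℝ ι) => q z.1 z.2) 2 volume
  selfAdjoint : ∀ z w, q z w = (starRingEnd ℂ) (q w z)
  pos : ∀ χ : EuclideanSpace ℝ ι × EuclideanSpace ℝ ι → ℂ,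
    0 ≤ (∫ z, ∫ w, (starRingEnd ℂ) (χ z) * q z w * χ w).re
  diag_int : Integrable (fun z : EuclideanSpace ℝ ι × EuclideanSpace ℝ ι => q z z)
  trace_one : ∫ z : EuclideanSpace ℝ ι × EuclideanSpace ℝ ι, q z z = 1
  marginal_fst : ∀ x y, (∫ z, q (x, z) (y, z)) = r x y
  marginal_snd : ∀ x y, (∫ z, q (z, x) (z, y)) = r' x y

/-- The squared quantum pseudo-distance
`MK_λ(R,R')² := inf_{Q ∈ C(R,R')} trace(Q^{1/2} C_λ Q^{1/2})`. -/
def MKsq {ι : Type*} [Fintype ι] [DecidableEq ι] (lam : ℝ)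
    (r r' : EuclideanSpace ℝ ι → EuclideanSpace ℝ ι → ℂ) : ℝ :=
  sInf (mkCost lam '' {q | IsCoupling r r' q})

/-- `∂_{x_j}` in the first variable of a one-particle kernel. -/
def d1 {ι : Type*} [Fintype ι] [DecidableEq ι] (j : ι)
    (r : EuclideanSpace ℝ ι → EuclideanSpace ℝ ι → ℂ) :
    EuclideanSpace ℝ ι → EuclideanSpace ℝ ι → ℂ :=
  fun x y => fderiv ℝ (fun x' => r x' y) x (EuclideanSpace.single j (1 : ℝ))

/-- `∂_{y_j}` in the second variable of a one-particle kernel. -/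
def d2 {ι : Type*} [Fintype ι] [DecidableEq ι] (j : ι)
    (r : EuclideanSpace ℝ ι → EuclideanSpace ℝ ι → ℂ) :
    EuclideanSpace ℝ ι → EuclideanSpace ℝ ι → ℂ :=
  fun x y => fderiv ℝ (fun y' => r x y') y (EuclideanSpace.single j (1 : ℝ))

/-- `R ∈ D²(L²(ℝ^ι))`: a density-operator kernel with finite second moments in
position and momentum. -/
structure IsDensity2 {ι : Type*} [Fintype ι] [DecidableEq ι]
    (r : EuclideanSpace ℝ ι → EuclideanSpace ℝ ι → ℂ) : Prop where
  memL2 : MemLp (fun z : EuclideanSpace ℝ ι × EuclideanSpace ℝ ι => r z.1 z.2) 2 volume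
  selfAdjoint : ∀ x y, r x y = (starRingEnd ℂ) (r y x)
  pos : ∀ χ : EuclideanSpace ℝ ι → ℂ,
    0 ≤ (∫ x, ∫ y, (starRingEnd ℂ) (χ x) * r x y * χ y).re
  diag_int : Integrable (fun x : EuclideanSpace ℝ ι => r x x)
  trace_one : ∫ x, r x x = 1
  moment_pos : Integrable (fun x : EuclideanSpace ℝ ι => ((‖x‖ ^ 2 : ℝ) : ℂ) * r x x)
  moment_mom : Integrable (fun x : EuclideanSpace ℝ ι => ∑ j, d1 j (d2 j r) x x)

/-- Integral kernel of `R^λ := S_λ R S_λ*`: `λ^{-d/2} r(x/√λ, y/√λ)`. -/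
def kernelScale {ι : Type*} [Fintype ι] (lam : ℝ)
    (r : EuclideanSpace ℝ ι → EuclideanSpace ℝ ι → ℂ)
    (x y : EuclideanSpace ℝ ι) : ℂ :=
  ((lam ^ (-(Fintype.card ι : ℝ) / 2) : ℝ) : ℂ) *
    r ((Real.sqrt lam)⁻¹ • x) ((Real.sqrt lam)⁻¹ • y)

open Module

instance Prod.isAddHaarMeasure_volume {E F : Type*} [NormedAddCommGroup E] [NormedSpace ℝ E]
    [FiniteDimensional ℝ E] [MeasureSpace E] [BorelSpace E] [(volume : Measure E).IsAddHaarMeasure]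
    [NormedAddCommGroup F] [NormedSpace ℝ F] [FiniteDimensional ℝ F] [MeasureSpace F]
    [BorelSpace F] [(volume : Measure F).IsAddHaarMeasure] :
    (volume : Measure (E × F)).IsAddHaarMeasure :=
  Measure.prod.instIsAddHaarMeasure _ _

section Haar

variable {E : Type*} [NormedAddCommGroup E] [NormedSpace ℝ E] [MeasurableSpace E] [BorelSpace E]
  [FiniteDimensional ℝ E] {μ : Measure E} [μ.IsAddHaarMeasure]

theorem MeasureTheory.MemLp.comp_smul {G : Type*} [NormedAddCommGroup G] {p : ENNReal} {f : E → G}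
    (hf : MemLp f p μ) {R : ℝ} (hR : R ≠ 0) : MemLp (fun x => f (R • x)) p μ := by
  let e : E ≃ᵐ E := (Homeomorph.smul (isUnit_iff_ne_zero.2 hR).unit).toMeasurableEquiv
  have hmap : MemLp f p (Measure.map (R • ·) μ) := by
    rw [Measure.map_addHaar_smul μ hR]
    exact hf.smul_measure ENNReal.ofReal_ne_top
  exact e.memLp_map_measure_iff.mp hmap

theorem integral_integral_comp_smul_of_nonneg {G : Type*} [NormedAddCommGroup G]
    [NormedSpace ℝ G] (F : E → E → G) {R : ℝ} (hR : 0 ≤ R) :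
    ∫ z, ∫ w, F (R • z) (R • w) ∂μ ∂μ
      = ((R ^ finrank ℝ E)⁻¹ * (R ^ finrank ℝ E)⁻¹) • ∫ z, ∫ w, F z w ∂μ ∂μ := by
  simp_rw [Measure.integral_comp_smul_of_nonneg μ (F _) R (hR := hR), integral_smul,
    Measure.integral_comp_smul_of_nonneg μ (fun z => ∫ w, F z w ∂μ) R (hR := hR), smul_smul]

end Haar

section Dilation

variable {E : Type*} [AddCommGroup E] [Module ℝ E]

/-- Kernel of `U R U*` for the unitary dilation `(U ψ)(x) = t^{n/2} ψ(t x)` on `L²(E)`,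
`n = dim E`; thus `R^λ` is `dilate λ^{-1/2} R`. -/
def dilate (t : ℝ) (q : E → E → ℂ) : E → E → ℂ :=
  fun z w => (t ^ finrank ℝ E) • q (t • z) (t • w)

theorem dilate_dilate (s t : ℝ) (q : E → E → ℂ) : dilate s (dilate t q) = dilate (t * s) q := by
  funext z w
  simp only [dilate, smul_smul, mul_pow]
  ring_nf

theorem dilate_one (q : E → E → ℂ) : dilate 1 q = q := by
  funext z w
  simp [dilate]

theorem dilate_inv_dilate {t : ℝ} (ht : t ≠ 0) (q : E → E → ℂ) : dilate t⁻¹ (dilate t q) = q := by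
  rw [dilate_dilate, mul_inv_cancel₀ ht, dilate_one]

end Dilation

theorem kernelScale_eq_dilate {ι : Type*} [Fintype ι] {lam : ℝ} (hlam : 0 < lam)
    (r : EuclideanSpace ℝ ι → EuclideanSpace ℝ ι → ℂ) :
    kernelScale lam r = dilate (Real.sqrt lam)⁻¹ r := by
  funext x y
  have : lam ^ (-(Fintype.card ι : ℝ) / 2) = (Real.sqrt lam)⁻¹ ^ Fintype.card ι := by
    rw [Real.sqrt_eq_rpow, ← Real.rpow_neg hlam.le, ← Real.rpow_mul_natCast hlam.le]
    ring_nf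
  simp only [kernelScale, dilate, finrank_euclideanSpace, this, Complex.real_smul]

section DilationIntegrals

variable {E F : Type*} [NormedAddCommGroup E] [NormedSpace ℝ E] [FiniteDimensional ℝ E]
  [MeasureSpace E] [BorelSpace E] [(volume : Measure E).IsAddHaarMeasure]
  [AddCommGroup F] [Module ℝ F] [FiniteDimensional ℝ F] {t : ℝ}

theorem integral_dilate_diag (ht : 0 < t) (q : E → E → ℂ) :
    ∫ z, dilate t q z z = ∫ z, q z z := by
  have hcomp := Measure.integral_comp_smul_of_nonneg volume (fun u => q u u) t (hR := ht.le)
  simp only [dilate, integral_smul, hcomp, smul_smul, mul_inv_cancel₀ (pow_ne_zero _ ht.ne'),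
    one_smul]

theorem integral_dilate_fst (ht : 0 < t) (q : F × E → F × E → ℂ) (x y : F) :
    ∫ z, dilate t q (x, z) (y, z) = t ^ finrank ℝ F • ∫ z, q (t • x, z) (t • y, z) := by
  have hcomp := Measure.integral_comp_smul_of_nonneg volume
    (fun u => q (t • x, u) (t • y, u)) t (hR := ht.le)
  simp only [dilate, Prod.smul_mk, integral_smul, hcomp, smul_smul, finrank_prod, pow_add]
  field_simp

theorem integral_dilate_snd (ht : 0 < t) (q : E × F → E × F → ℂ) (x y : F) :
    ∫ z, dilate t q (z, x) (z, y) = t ^ finrank ℝ F • ∫ z, q (z, t • x) (z, t • y) := by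
  have hcomp := Measure.integral_comp_smul_of_nonneg volume
    (fun u => q (u, t • x) (u, t • y)) t (hR := ht.le)
  simp only [dilate, Prod.smul_mk, integral_smul, hcomp, smul_smul, finrank_prod, pow_add]
  field_simp

theorem integral_integral_conj_mul_dilate_mul (ht : 0 < t) (q : E → E → ℂ) (χ : E → ℂ) :
    ∫ z, ∫ w, (starRingEnd ℂ) (χ z) * dilate t q z w * χ w
      = (t ^ finrank ℝ E)⁻¹ •
        ∫ z, ∫ w, (starRingEnd ℂ) (χ (t⁻¹ • z)) * q z w * χ (t⁻¹ • w) := by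
  have hcomp := integral_integral_comp_smul_of_nonneg (μ := volume)
    (fun u v => (starRingEnd ℂ) (χ (t⁻¹ • u)) * q u v * χ (t⁻¹ • v)) ht.le
  simp only [inv_smul_smul₀ ht.ne'] at hcomp
  simp only [dilate, mul_smul_comm, smul_mul_assoc, integral_smul, hcomp, smul_smul]
  field_simp

end DilationIntegrals

theorem fderiv_const_smul_comp_smul_apply {F G : Type*} [NormedAddCommGroup F] [NormedSpace ℝ F]
    [NormedAddCommGroup G] [NormedSpace ℝ G] (c t : ℝ) (f : F → G) (x v : F) :
    fderiv ℝ (fun y => c • f (t • y)) x v = (c * t) • fderiv ℝ f (t • x) v := by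
  rw [show (fun y => c • f (t • y)) = c • (f <| t • ·) from rfl, fderiv_const_smul_field,
    Pi.smul_apply, fderiv_comp_smul, mul_smul]
  rfl

section KernelDerivatives

variable {ι : Type*} [Fintype ι] [DecidableEq ι] (j : ι)
  (q : (EuclideanSpace ℝ ι × EuclideanSpace ℝ ι) → (EuclideanSpace ℝ ι × EuclideanSpace ℝ ι) → ℂ)

theorem D1_smul (c : ℝ) : D1 j (c • q) = c • D1 j q := by
  funext z w
  have h := fderiv_const_smul_comp_smul_apply c 1 (q · w) z (vdir j)
  simp only [one_smul, mul_one] at h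
  exact h

theorem D1_dilate (t : ℝ) : D1 j (dilate t q) = t • dilate t (D1 j q) := by
  funext z w
  refine (fderiv_const_smul_comp_smul_apply _ t (q · (t • w)) z (vdir j)).trans ?_
  rw [mul_comm, mul_smul]
  rfl

theorem D2_dilate (t : ℝ) : D2 j (dilate t q) = t • dilate t (D2 j q) := by
  funext z w
  refine (fderiv_const_smul_comp_smul_apply _ t (q (t • z) ·) w (vdir j)).trans ?_
  rw [mul_comm, mul_smul]
  rfl

theorem D1_D2_dilate (t : ℝ) : D1 j (D2 j (dilate t q)) = (t * t) • dilate t (D1 j (D2 j q)) := by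
  rw [D2_dilate, D1_smul, D1_dilate, smul_smul]

end KernelDerivatives

theorem norm_fst_sub_snd_smul {E : Type*} [SeminormedAddCommGroup E] [NormedSpace ℝ E] (t : ℝ)
    (z : E × E) : ‖(t • z).1 - (t • z).2‖ = |t| * ‖z.1 - z.2‖ := by
  rw [Prod.smul_fst, Prod.smul_snd, ← smul_sub, norm_smul, Real.norm_eq_abs]

section Scaling

variable {ι : Type*} [Fintype ι] {t : ℝ} {r r' : EuclideanSpace ℝ ι → EuclideanSpace ℝ ι → ℂ}
  {q : (EuclideanSpace ℝ ι × EuclideanSpace ℝ ι) → (EuclideanSpace ℝ ι × EuclideanSpace ℝ ι) → ℂ}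

theorem isCoupling_dilate (ht : 0 < t) (h : IsCoupling r r' q) :
    IsCoupling (dilate t r) (dilate t r') (dilate t q) where
  memL2 := by
    -- instance search gives up on the doubly nested product
    have := Prod.isAddHaarMeasure_volume (E := EuclideanSpace ℝ ι × EuclideanSpace ℝ ι)
      (F := EuclideanSpace ℝ ι × EuclideanSpace ℝ ι)
    exact (h.memL2.comp_smul ht.ne').const_smul
      (t ^ finrank ℝ (EuclideanSpace ℝ ι × EuclideanSpace ℝ ι))
  selfAdjoint z w := by
    rw [dilate, dilate, h.selfAdjoint (t • z)]
    simp only [starRingEnd_apply, star_smul, star_trivial]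
  pos χ := by
    rw [integral_integral_conj_mul_dilate_mul ht, Complex.smul_re]
    exact mul_nonneg (by positivity) (h.pos _)
  diag_int := (h.diag_int.comp_smul ht.ne').smul (t ^ finrank ℝ _)
  trace_one := by rw [integral_dilate_diag ht, h.trace_one]
  marginal_fst x y := by rw [integral_dilate_fst ht, h.marginal_fst]; rfl
  marginal_snd x y := by rw [integral_dilate_snd ht, h.marginal_snd]; rfl

theorem setOf_isCoupling_dilate (ht : 0 < t) :
    {q | IsCoupling (dilate t r) (dilate t r') q} = dilate t '' {q | IsCoupling r r' q} := by
  ext q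
  refine ⟨fun hq => ⟨dilate t⁻¹ q, ?_, ?_⟩, ?_⟩
  · show IsCoupling r r' _
    simpa only [dilate_inv_dilate ht.ne'] using isCoupling_dilate (inv_pos.2 ht) hq
  · rw [dilate_dilate, inv_mul_cancel₀ ht.ne', dilate_one]
  · rintro ⟨p, hp, rfl⟩
    exact isCoupling_dilate ht hp

variable [DecidableEq ι]

def costDensity (lam : ℝ)
    (q : (EuclideanSpace ℝ ι × EuclideanSpace ℝ ι) → (EuclideanSpace ℝ ι × EuclideanSpace ℝ ι) → ℂ)
    (z : EuclideanSpace ℝ ι × EuclideanSpace ℝ ι) : ℝ :=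
  (((‖z.1 - z.2‖ ^ 2 : ℝ) : ℂ) * q z z + ((lam ^ 2 : ℝ) : ℂ) * ∑ j, D1 j (D2 j q) z z).re

theorem mkCost_eq_integral_costDensity (lam : ℝ) :
    mkCost lam q = ∫ z, costDensity lam q z :=
  rfl

theorem costDensity_dilate (ht : t ≠ 0) (lam : ℝ) (z : EuclideanSpace ℝ ι × EuclideanSpace ℝ ι) :
    costDensity lam (dilate t q) z
      = (t ^ finrank ℝ (EuclideanSpace ℝ ι × EuclideanSpace ℝ ι) * (t ^ 2)⁻¹) *
        costDensity (lam * t ^ 2) q (t • z) := by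
  have htC : (t : ℂ) ≠ 0 := Complex.ofReal_ne_zero.2 ht
  rw [costDensity, costDensity, norm_fst_sub_snd_smul, ← Complex.re_ofReal_mul]
  congr 1
  simp only [D1_D2_dilate, dilate, Pi.smul_apply, Complex.real_smul, mul_pow, sq_abs]
  push_cast
  simp only [← Finset.mul_sum]
  field_simp

theorem mkCost_dilate (ht : 0 < t) (lam : ℝ) :
    mkCost lam (dilate t q) = (t ^ 2)⁻¹ * mkCost (lam * t ^ 2) q := by
  rw [mkCost_eq_integral_costDensity, mkCost_eq_integral_costDensity]
  simp_rw [costDensity_dilate ht.ne']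
  rw [integral_const_mul, Measure.integral_comp_smul_of_nonneg volume _ t (hR := ht.le),
    smul_eq_mul]
  field_simp

theorem MKsq_dilate (ht : 0 < t) (lam : ℝ) :
    MKsq lam (dilate t r) (dilate t r') = (t ^ 2)⁻¹ * MKsq (lam * t ^ 2) r r' := by
  rw [MKsq, MKsq, setOf_isCoupling_dilate ht, Set.image_image]
  simp_rw [mkCost_dilate ht]
  simpa only [← Set.image_smul, Set.image_image, smul_eq_mul] using
    Real.sInf_smul_of_nonneg (by positivity : (0 : ℝ) ≤ (t ^ 2)⁻¹)
      (mkCost (lam * t ^ 2) '' {q | IsCoupling r r' q})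

end Scaling

theorem MKsq_scaling_general (d : ℕ) (lam : ℝ) (hlam : 0 < lam)
    (r r' : EuclideanSpace ℝ (Fin d) → EuclideanSpace ℝ (Fin d) → ℂ) :
    MKsq lam (kernelScale lam r) (kernelScale lam r') = lam * MKsq 1 r r' := by
  have hsq : (Real.sqrt lam)⁻¹ ^ 2 = lam⁻¹ := by rw [inv_pow, Real.sq_sqrt hlam.le]
  rw [kernelScale_eq_dilate hlam, kernelScale_eq_dilate hlam,
    MKsq_dilate (inv_pos.2 (Real.sqrt_pos.2 hlam)), hsq, inv_inv, mul_inv_cancel₀ hlam.ne']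

/-- Scaling property: `MK_λ(R^λ, (R')^λ)² = λ · MK_1(R, R')²` for density operators
`R, R'` with finite second moments. -/
theorem MKsq_scaling (d : ℕ) (lam : ℝ) (hlam : 0 < lam)
    (r r' : EuclideanSpace ℝ (Fin d) → EuclideanSpace ℝ (Fin d) → ℂ)
    (hr : IsDensity2 r) (hr' : IsDensity2 r') :
    MKsq lam (kernelScale lam r) (kernelScale lam r') = lam * MKsq 1 r r' :=
  MKsq_scaling_general d lam hlam r r'
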